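/- arXiv:1512.05843 — 8 statements merged into one kernel-verified Lean document; each statement's English description precedes it below -/
import Mathlib

section
/- If L is a Lie algebra over a field F of characteristic zero and f is a linear functional on L vanishing on the derived algebra (i.e., f([u,v]) = 0 for all u, v in L), then the ternary bracket [u,v,w]_f := f(u)[v,w] + f(v)[w,u] + f(w)[u,v] makes L into a 3-Lie algebra, i.e., it is multilinear, totally skew-symmetric, and satisfies the generalized Jacobi identity [[u1,u2,u3], v2, v3] = [[u1,v2,v3], u2, u3] + [u1, [u2,v2,v3], u3] + [u1, u2, [u3,v2,v3]]. -/
noncomputable section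

/-- Trilinearity of a ternary bracket. -/
def IsTrilinear (F : Type) {V : Type} [Field F] [AddCommGroup V] [Module F V]
    (br : V → V → V → V) : Prop :=
  (∀ (a : F) (u u' v w : V), br (a • u + u') v w = a • br u v w + br u' v w) ∧
  (∀ (a : F) (u v v' w : V), br u (a • v + v') w = a • br u v w + br u v' w) ∧
  (∀ (a : F) (u v w w' : V), br u v (a • w + w') = a • br u v w + br u v w')

/-- Total skew-symmetry of a ternary bracket. -/
def IsSkew {V : Type} [AddCommGroup V] (br : V → V → V → V) : Prop :=
  ∀ u v w : V, br u v w = - br v u w ∧ br u v w = - br u w v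

/-- The generalized Jacobi (Filippov) identity. -/
def Jacobi {V : Type} [AddCommGroup V] (br : V → V → V → V) : Prop :=
  ∀ u1 u2 u3 v2 v3 : V, br (br u1 u2 u3) v2 v3 =
    br (br u1 v2 v3) u2 u3 + br u1 (br u2 v2 v3) u3 + br u1 u2 (br u3 v2 v3)

/-- a linear functional vanishing on the derived algebra of a Lie
algebra induces a 3-Lie algebra structure. -/
theorem stmt0 (F L : Type) [Field F] [CharZero F] [LieRing L] [LieAlgebra F L]
    (f : L →ₗ[F] F) (hf : ∀ u v : L, f ⁅u, v⁆ = 0)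
    (br : L → L → L → L)
    (hbr : ∀ u v w : L, br u v w = f u • ⁅v, w⁆ + f v • ⁅w, u⁆ + f w • ⁅u, v⁆) :
    IsTrilinear F br ∧ IsSkew br ∧ Jacobi br := by
  have hs : ∀ x y : L, ⁅x, y⁆ = -⁅y, x⁆ := by
    intro x y
    rw [← lie_skew]
  refine ⟨⟨?_, ?_, ?_⟩, ?_, ?_⟩
  · intro a u u' v w
    simp only [hbr, map_add, map_smul, add_lie, lie_add, smul_lie, lie_smul, smul_add,
      smul_eq_mul, mul_smul]
    module
  · intro a u v v' w
    simp only [hbr, map_add, map_smul, add_lie, lie_add, smul_lie, lie_smul, smul_add,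
      smul_eq_mul, mul_smul]
    module
  · intro a u v w w'
    simp only [hbr, map_add, map_smul, add_lie, lie_add, smul_lie, lie_smul, smul_add,
      smul_eq_mul, mul_smul]
    module
  · intro u v w
    constructor
    · simp only [hbr]
      linear_combination (norm := module)
        (f u) • hs v w + (f v) • hs w u + (f w) • hs u v
    · simp only [hbr]
      linear_combination (norm := module)
        (f u) • hs v w + (f v) • hs w u + (f w) • hs u v
  · have h : ∀ x y z : L, ⁅⁅x, y⁆, z⁆ = ⁅⁅x, z⁆, y⁆ + ⁅x, ⁅y, z⁆⁆ := by
      intro x y z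
      have h2 : ⁅⁅x, z⁆, y⁆ = -⁅y, ⁅x, z⁆⁆ := by rw [← lie_skew]
      linear_combination (norm := module) (-1 : F) • leibniz_lie x y z - h2
    intro u1 u2 u3 v2 v3
    simp only [hbr, map_add, map_smul, hf, smul_zero, add_zero, zero_add, smul_eq_mul,
      mul_zero, zero_smul, smul_add, lie_add, add_lie, lie_smul, smul_lie]
    linear_combination (norm := module)
      (f v2 * f u1) • leibniz_lie v3 u2 u3 +
      (f v2 * f u2) • leibniz_lie v3 u3 u1 +
      (f v2 * f u3) • leibniz_lie v3 u1 u2 +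
      (f v3 * f u1) • h u2 u3 v2 +
      (f v3 * f u2) • h u3 u1 v2 +
      (f v3 * f u3) • h u1 u2 v2 +
      (f u1 * f u2) • lie_skew u3 ⁅v2, v3⁆ +
      (f u2 * f u3) • lie_skew u1 ⁅v2, v3⁆ +
      (f u1 * f u3) • lie_skew u2 ⁅v2, v3⁆
end
end

section
/- Let A be a commutative associative algebra over a field F of characteristic zero, let \delta be a derivation of A and \omega an involution of A (an algebra automorphism with \omega^2 = id) satisfying \omega\delta + \delta\omega = 0. Then the bracket [u,v,w] defined as the 3x3 determinant with rows (\omega(u), \omega(v), \omega(w)), (u, v, w), (\delta(u), \delta(v), \delta(w)) makes A into a 3-Lie algebra. -/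
noncomputable section

/-- a derivation δ and involution ω of a commutative associative
algebra with ωδ + δω = 0 induce a 3-Lie algebra via the determinant bracket. -/
theorem stmt1 (F B : Type) [Field F] [CharZero F] [NonUnitalCommRing B]
    [Module F B] [SMulCommClass F B B] [IsScalarTower F B B]
    (δ ω : B →ₗ[F] B)
    (hδ : ∀ u v : B, δ (u * v) = δ u * v + u * δ v)
    (hωmul : ∀ u v : B, ω (u * v) = ω u * ω v)
    (hω2 : ∀ u : B, ω (ω u) = u)
    (hanti : ∀ u : B, ω (δ u) + δ (ω u) = 0)
    (br : B → B → B → B)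
    (hbr : ∀ u v w : B, br u v w =
      ω u * (v * δ w - w * δ v) - ω v * (u * δ w - w * δ u) + ω w * (u * δ v - v * δ u)) :
    IsTrilinear F br ∧ IsSkew br ∧ Jacobi br := by
  have haux : ∀ u : B, ω (δ u) = - δ (ω u) := fun u =>
    eq_neg_of_add_eq_zero_left (hanti u)
  have key : ∀ x y : B, ((x : Unitization F B) = (y : Unitization F B)) → x = y :=
    fun x y h => Unitization.inr_injective h
  refine ⟨⟨?_, ?_, ?_⟩, ?_, ?_⟩
  · intro a u u' v w
    apply key
    simp only [hbr, map_add, map_smul, Unitization.inr_add, Unitization.inr_sub,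
      Unitization.inr_mul, Unitization.inr_smul, Algebra.smul_def]
    ring
  · intro a u v v' w
    apply key
    simp only [hbr, map_add, map_smul, Unitization.inr_add, Unitization.inr_sub,
      Unitization.inr_mul, Unitization.inr_smul, Algebra.smul_def]
    ring
  · intro a u v w w'
    apply key
    simp only [hbr, map_add, map_smul, Unitization.inr_add, Unitization.inr_sub,
      Unitization.inr_mul, Unitization.inr_smul, Algebra.smul_def]
    ring
  · intro u v w
    constructor <;>
    · apply key
      simp only [hbr, Unitization.inr_add, Unitization.inr_sub, Unitization.inr_mul,
        Unitization.inr_neg]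
      ring
  · intro u1 u2 u3 v2 v3
    apply key
    simp only [hbr, map_sub, map_add, map_neg, hδ, hωmul, haux, hω2, mul_neg, neg_mul,
      Unitization.inr_add, Unitization.inr_sub, Unitization.inr_mul, Unitization.inr_neg]
    ring
end
end

section
/- Let A be the 3-Lie algebra with basis {L_r, M_r : r \in \mathbb{Z}} over a field F of characteristic zero, with bracket [L_r, L_s, M_t] = f(M_t)(r-s)L_{r+s+k} (all other basis brackets zero), where f is a nonzero linear functional with f(L_r) = 0 for all r. Then A is not solvable: the derived series A^{(0)} = A, A^{(s+1)} = [A^{(s)}, A^{(s)}, A] satisfies A^{(s)} \ne 0 for all s \ge 0. -/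
noncomputable section

/-- The vector space with basis `{L_r, M_r : r ∈ ℤ}`. -/
abbrev A (F : Type) [Field F] : Type := (ℤ ⊕ ℤ) →₀ F

/-- The basis vector `L_r`. -/
def Lb (F : Type) [Field F] (r : ℤ) : A F := Finsupp.single (Sum.inl r) 1

/-- The basis vector `M_r`. -/
def Mb (F : Type) [Field F] (r : ℤ) : A F := Finsupp.single (Sum.inr r) 1

/-- The derived series of a ternary bracket on `A`. -/
def derSeries {F : Type} [Field F] (br : A F → A F → A F → A F) : ℕ → Submodule F (A F)
  | 0 => ⊤
  | s + 1 => Submodule.span F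
      {x | ∃ u v w, u ∈ derSeries br s ∧ v ∈ derSeries br s ∧ x = br u v w}

/-- the 3-Lie algebra of Theorem 3.1 is not solvable. -/
theorem stmt3 (F : Type) [Field F] [CharZero F] (k : ℤ)
    (f : A F →ₗ[F] F) (hfL : ∀ r : ℤ, f (Lb F r) = 0) (hf0 : f ≠ 0)
    (br : A F → A F → A F → A F)
    (htri : IsTrilinear F br) (hskew : IsSkew br)
    (hLLM : ∀ r s t : ℤ,
      br (Lb F r) (Lb F s) (Mb F t) = (f (Mb F t) * ((r : F) - (s : F))) • Lb F (r + s + k))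
    (hLLL : ∀ r s t : ℤ, br (Lb F r) (Lb F s) (Lb F t) = 0)
    (hLMM : ∀ r s t : ℤ, br (Lb F r) (Mb F s) (Mb F t) = 0)
    (hMMM : ∀ r s t : ℤ, br (Mb F r) (Mb F s) (Mb F t) = 0) :
    ∀ s : ℕ, derSeries br s ≠ ⊥ := by
  obtain ⟨t, ht⟩ : ∃ t, f (Mb F t) ≠ 0 := by
    by_contra h
    push_neg at h
    apply hf0
    apply Finsupp.lhom_ext
    intro a b
    have hb : (Finsupp.single a b : A F) = b • Finsupp.single a 1 := by
      rw [Finsupp.smul_single, smul_eq_mul, mul_one]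
    rw [hb, map_smul, map_smul]
    cases a with
    | inl r => have := hfL r; simp only [Lb] at this; simp [this]
    | inr r => have := h r; simp only [Mb] at this; simp [this]
  have key : ∀ s : ℕ, ∀ m : ℤ, Lb F m ∈ derSeries br s := by
    intro s
    induction s with
    | zero => intro m; exact Submodule.mem_top
    | succ n ih =>
      intro m
      obtain ⟨r, s', hrs, hne⟩ : ∃ r s' : ℤ, r + s' + k = m ∧ r ≠ s' := by
        rcases eq_or_ne (m - k) 0 with h | h
        · exact ⟨1, -1, by omega, by omega⟩
        · exact ⟨m - k, 0, by omega, h⟩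
      have hmem : br (Lb F r) (Lb F s') (Mb F t) ∈ derSeries br (n + 1) :=
        Submodule.subset_span ⟨Lb F r, Lb F s', Mb F t, ih r, ih s', rfl⟩
      have hcast : ((r : F) ≠ (s' : F)) := by exact_mod_cast hne
      have hc : (f (Mb F t) * ((r : F) - (s' : F))) ≠ 0 :=
        mul_ne_zero ht (sub_ne_zero.mpr hcast)
      have h2 := Submodule.smul_mem (derSeries br (n + 1))
        (f (Mb F t) * ((r : F) - (s' : F)))⁻¹ hmem
      rw [hLLM, smul_smul, inv_mul_cancel₀ hc, one_smul, hrs] at h2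
      exact h2
  intro s hs
  have h0 := key s 0
  rw [hs, Submodule.mem_bot] at h0
  simp [Lb, Finsupp.single_eq_zero] at h0
end
end

section
/- The 3-Lie algebra A_\omega^\delta with basis {L_r, M_r : r \in \mathbb{Z}} over a field of characteristic zero, with bracket [L_r, L_s, M_t] = (s-r)L_{r+s-t}, [L_r, M_s, M_t] = (t-s)M_{s+t-r} (other basis brackets zero), is simple: it is non-abelian and every ideal J (a subspace with [J, A, A] \subseteq J) is either 0 or all of A. -/
noncomputable section

/-- The defining relations of the 3-Lie algebra `A_ω^δ` on basis elements. -/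
def AwdBracket {F : Type} [Field F] (br : A F → A F → A F → A F) : Prop :=
  (∀ r s t : ℤ, br (Lb F r) (Lb F s) (Mb F t) = ((s : F) - (r : F)) • Lb F (r + s - t)) ∧
  (∀ r s t : ℤ, br (Lb F r) (Mb F s) (Mb F t) = ((t : F) - (s : F)) • Mb F (s + t - r)) ∧
  (∀ r s t : ℤ, br (Lb F r) (Lb F s) (Lb F t) = 0) ∧
  (∀ r s t : ℤ, br (Mb F r) (Mb F s) (Mb F t) = 0)

/-!
The operator `T = ad(L₀, M₀) + 2 ad(L₁, M₁)` is diagonal in the basis, with pairwise distinct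
eigenvalues `2 - 3r` on `L_r` and `3r - 2` on `M_r`. An ideal is `T`-stable, so applying
`T - λ` repeatedly to a nonzero element of an ideal isolates one of its basis components:
every nonzero ideal contains a basis vector. From a single basis vector, brackets such as
`[L_r, L_{r+1}, M_t] = L_{2r+1-t}` produce all the others.
-/

namespace IsTrilinear

variable {F V : Type} [Field F] [AddCommGroup V] [Module F V] {br : V → V → V → V}

lemma map_add_left (htri : IsTrilinear F br) (u u' v w : V) :
    br (u + u') v w = br u v w + br u' v w := by
  simpa using htri.1 1 u u' v w

lemma map_zero_left (htri : IsTrilinear F br) (v w : V) : br 0 v w = 0 := by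
  simpa using (htri.map_add_left 0 0 v w).symm

lemma map_smul_left (htri : IsTrilinear F br) (a : F) (u v w : V) :
    br (a • u) v w = a • br u v w := by
  simpa [htri.map_zero_left] using htri.1 a u 0 v w

end IsTrilinear

theorem Finsupp.single_one_mem_of_diagonal_stable {ι K : Type*} [Field K] {ev : ι → K}
    (hev : Function.Injective ev) {T : (ι →₀ K) → (ι →₀ K)} (hT : ∀ x k, T x k = ev k * x k)
    {J : Submodule K (ι →₀ K)} (hTJ : ∀ x ∈ J, T x ∈ J) {x : ι →₀ K} (hxJ : x ∈ J) {i : ι}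
    (hi : x i ≠ 0) : Finsupp.single i 1 ∈ J := by
  classical
  obtain ⟨s, hsupp⟩ : ∃ s, x.support ⊆ insert i s := ⟨x.support, Finset.subset_insert _ _⟩
  induction s using Finset.induction_on generalizing x with
  | empty =>
    have hx : x = Finsupp.single i (x i) := Finsupp.support_subset_singleton.mp hsupp
    have hscaled := J.smul_mem (x i)⁻¹ hxJ
    rwa [hx, Finsupp.smul_single, Finsupp.single_eq_same, smul_eq_mul, inv_mul_cancel₀ hi]
      at hscaled
  | insert j s _ IH =>
    by_cases hji : j = i
    · subst hji
      exact IH hxJ hi (by simpa using hsupp)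
    -- `T x - ev j • x` has the same support as `x`, except for `j`.
    have hy : ∀ k, (T x - ev j • x) k = (ev k - ev j) * x k := fun k => by
      simp [hT, sub_mul]
    refine IH (x := T x - ev j • x) (J.sub_mem (hTJ x hxJ) (J.smul_mem _ hxJ)) ?_ ?_
    · rw [hy]
      exact mul_ne_zero (sub_ne_zero.mpr (hev.ne (Ne.symm hji))) hi
    · intro k hk
      rw [Finsupp.mem_support_iff, hy] at hk
      obtain ⟨hkj, hxk⟩ := mul_ne_zero_iff.mp hk
      have hk' := hsupp (Finsupp.mem_support_iff.mpr hxk)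
      simp only [Finset.mem_insert] at hk' ⊢
      rcases hk' with hk' | rfl | hk'
      exacts [Or.inl hk', absurd rfl (sub_ne_zero.mp hkj), Or.inr hk']

namespace Awd

variable {F : Type} [Field F] {br : A F → A F → A F → A F}

def weight : ℤ ⊕ ℤ → ℤ
  | Sum.inl r => 2 - 3 * r
  | Sum.inr r => 3 * r - 2

lemma weight_injective : Function.Injective weight := by
  rintro (r | r) (s | s) h <;> simp only [weight] at h <;> congr 1 <;> omega

/- `ad(L₀, M₀)` alone acts by `-r` on `L_r` and by `r` on `M_r`, so `L_r` and `M_{-r}` would share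
an eigenvalue; the summand `2 ad(L₁, M₁)` separates them. -/
variable (br) in
def weightOp (x : A F) : A F :=
  br x (Lb F 0) (Mb F 0) + (2 : F) • br x (Lb F 1) (Mb F 1)

lemma weightOp_single (htri : IsTrilinear F br) (hskew : IsSkew br) (hAwd : AwdBracket br)
    (i : ℤ ⊕ ℤ) (c : F) :
    weightOp br (Finsupp.single i c) = (weight i : F) • Finsupp.single i c := by
  rcases i with r | r
  · have hc : (Finsupp.single (Sum.inl r) c : A F) = c • Lb F r := by
      simp [Lb, Finsupp.smul_single]
    rw [hc, weightOp, htri.map_smul_left, htri.map_smul_left, hAwd.1, hAwd.1,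
      add_zero, sub_zero, add_sub_cancel_right]
    match_scalars
    push_cast [weight]
    ring
  · have hc : (Finsupp.single (Sum.inr r) c : A F) = c • Mb F r := by
      simp [Mb, Finsupp.smul_single]
    rw [hc, weightOp, htri.map_smul_left, htri.map_smul_left, (hskew _ (Lb F 0) _).1,
      (hskew _ (Lb F 1) _).1, hAwd.2.1, hAwd.2.1,
      add_zero, sub_zero, add_sub_cancel_right]
    match_scalars
    push_cast [weight]
    ring

lemma weightOp_apply (htri : IsTrilinear F br) (hskew : IsSkew br) (hAwd : AwdBracket br)
    (x : A F) (k : ℤ ⊕ ℤ) : weightOp br x k = (weight k : F) * x k := by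
  induction x using Finsupp.induction_linear with
  | zero => simp [weightOp, htri.map_zero_left]
  | add f g hf hg =>
    have hadd : weightOp br (f + g) = weightOp br f + weightOp br g := by
      simp only [weightOp, htri.map_add_left, smul_add]
      abel
    simp [hadd, hf, hg, mul_add]
  | single i c =>
    rw [weightOp_single htri hskew hAwd, Finsupp.smul_apply, smul_eq_mul]
    rcases eq_or_ne i k with rfl | h
    · rfl
    · simp [h]

variable {J : Submodule F (A F)} (hJ : ∀ u v w : A F, u ∈ J → br u v w ∈ J)
include hJ

lemma Lb_mem_of_Lb_mem (hAwd : AwdBracket br) {r : ℤ} (hr : Lb F r ∈ J) (n : ℤ) :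
    Lb F n ∈ J := by
  have h := hAwd.1 r (r + 1) (2 * r + 1 - n)
  rw [show r + (r + 1) - (2 * r + 1 - n) = n by ring, Int.cast_add, Int.cast_one,
    add_sub_cancel_left, one_smul] at h
  exact h ▸ hJ _ _ _ hr

lemma Mb_mem_of_Lb_mem (hAwd : AwdBracket br) (hL : ∀ r, Lb F r ∈ J) (n : ℤ) :
    Mb F n ∈ J := by
  have h := hAwd.2.1 (1 - n) 0 1
  rw [show (0 : ℤ) + 1 - (1 - n) = n by ring, Int.cast_one, Int.cast_zero, sub_zero,
    one_smul] at h
  exact h ▸ hJ _ _ _ (hL (1 - n))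

lemma Lb_mem_of_Mb_mem (hskew : IsSkew br) (hAwd : AwdBracket br) {r : ℤ} (hr : Mb F r ∈ J) :
    Lb F (1 - r) ∈ J := by
  have h : br (Mb F r) (Lb F 0) (Lb F 1) = Lb F (1 - r) := by
    rw [(hskew _ _ _).1, (hskew (Lb F 0) _ _).2, neg_neg, hAwd.1]
    simp
  exact h ▸ hJ _ _ _ hr

lemma eq_top_of_single_one_mem (hskew : IsSkew br) (hAwd : AwdBracket br) {i : ℤ ⊕ ℤ}
    (hi : Finsupp.single i 1 ∈ J) : J = ⊤ := by
  have hL : ∀ n, Lb F n ∈ J := by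
    rcases i with r | r
    · exact Lb_mem_of_Lb_mem hJ hAwd hi
    · exact Lb_mem_of_Lb_mem hJ hAwd (Lb_mem_of_Mb_mem hJ hskew hAwd hi)
  rw [eq_top_iff, ← (Finsupp.basisSingleOne (R := F)).span_eq, Submodule.span_le]
  rintro _ ⟨j | j, rfl⟩
  · exact hL j
  · exact Mb_mem_of_Lb_mem hJ hAwd hL j

end Awd

theorem stmt9_general (F : Type) [Field F] [CharZero F]
    (br : A F → A F → A F → A F)
    (htri : IsTrilinear F br) (hskew : IsSkew br)
    (hAwd : AwdBracket br) :
    (¬ ∀ u v w : A F, br u v w = 0) ∧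
    (∀ J : Submodule F (A F), (∀ u v w : A F, u ∈ J → br u v w ∈ J) →
      J = ⊥ ∨ J = ⊤) := by
  refine ⟨fun h => ?_, fun J hJ => or_iff_not_imp_left.mpr fun hbot => ?_⟩
  · have h1 : br (Lb F 0) (Lb F 1) (Mb F 0) = Lb F 1 := by simpa using hAwd.1 0 1 0
    exact one_ne_zero (Finsupp.single_eq_zero.mp (h1 ▸ h _ _ _))
  obtain ⟨x, hxJ, hx0⟩ := Submodule.exists_mem_ne_zero_of_ne_bot hbot
  obtain ⟨i, hi⟩ := Finsupp.ne_iff.mp hx0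
  have hTJ : ∀ z ∈ J, Awd.weightOp br z ∈ J := fun z hz =>
    J.add_mem (hJ _ _ _ hz) (J.smul_mem _ (hJ _ _ _ hz))
  exact Awd.eq_top_of_single_one_mem hJ hskew hAwd <|
    Finsupp.single_one_mem_of_diagonal_stable (Int.cast_injective.comp Awd.weight_injective)
      (Awd.weightOp_apply htri hskew hAwd) hTJ hxJ hi

/-- the 3-Lie algebra `A_ω^δ` is simple. -/
theorem stmt9 (F : Type) [Field F] [CharZero F]
    (br : A F → A F → A F → A F)
    (htri : IsTrilinear F br) (hskew : IsSkew br) (hjac : Jacobi br)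
    (hAwd : AwdBracket br) :
    (¬ ∀ u v w : A F, br u v w = 0) ∧
    (∀ J : Submodule F (A F), (∀ u v w : A F, u ∈ J → br u v w ∈ J) →
      J = ⊥ ∨ J = ⊤) :=
  stmt9_general F br htri hskew hAwd
end
end

section
/- The canonical Nambu bracket on the polynomial algebra F[x, y, z] (or smooth functions of three variables), defined by [f1, f2, f3] = det of the Jacobian matrix \partial(f1,f2,f3)/\partial(x,y,z), is a 3-Lie bracket: it is trilinear, totally skew-symmetric, and satisfies the generalized Jacobi identity [[f1,f2,f3], g2, g3] = [[f1,g2,g3], f2, f3] + [f1, [f2,g2,g3], f3] + [f1, f2, [f3,g2,g3]]. -/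
noncomputable section

/-- The canonical Nambu bracket on `F[x,y,z]`: the Jacobian determinant. -/
def nambu {F : Type} [Field F] (f g h : MvPolynomial (Fin 3) F) :
    MvPolynomial (Fin 3) F :=
  Matrix.det
    !![MvPolynomial.pderiv 0 f, MvPolynomial.pderiv 1 f, MvPolynomial.pderiv 2 f;
       MvPolynomial.pderiv 0 g, MvPolynomial.pderiv 1 g, MvPolynomial.pderiv 2 g;
       MvPolynomial.pderiv 0 h, MvPolynomial.pderiv 1 h, MvPolynomial.pderiv 2 h]

/-
The bracket is `[f, g, h] = ∇f · (∇g × ∇h)`, a triple product, so trilinearity and skew-symmetry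
are those of the determinant. Fixing `g` and `h`, the bracket `[·, g, h]` is the derivative along
the vector field `X = ∇g × ∇h`, which is divergence-free because second partial derivatives commute.
For any vector field `X`, the derivative along `X` of a Jacobian determinant is the sum of the
determinants with one row differentiated along `X`, up to a correction `-(div X) [f₁, f₂, f₃]`
(Liouville's formula for the Lie derivative of the volume form). For `X = ∇g × ∇h` the correction
vanishes, and what is left is the generalized Jacobi identity.
-/

open Matrix

namespace MvPolynomial

variable {σ R : Type*}

theorem pderiv_pderiv_comm [CommRing R] (i j : σ) (f : MvPolynomial σ R) :
    pderiv i (pderiv j f) = pderiv j (pderiv i f) := by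
  have h : ⁅pderiv i, pderiv j⁆ = (0 : Derivation R (MvPolynomial σ R) (MvPolynomial σ R)) :=
    derivation_ext fun k => by
      classical
      rw [Derivation.commutator_apply]
      simp [pderiv_X, Pi.single_apply, apply_ite]
  simpa [Derivation.commutator_apply, sub_eq_zero] using congr($h f)

variable [CommSemiring R]

def grad (f : MvPolynomial σ R) : σ → MvPolynomial σ R := fun i => pderiv i f

theorem grad_smul_add {S : Type*} [CommSemiring S] [Algebra S R] (a : S) (f g : MvPolynomial σ R) :
    grad (a • f + g) = a • grad f + grad g := by
  ext1 i
  simp [grad]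

variable [Fintype σ]

def derivAlong (X : σ → MvPolynomial σ R) (f : MvPolynomial σ R) : MvPolynomial σ R :=
  X ⬝ᵥ grad f

def divergence (X : σ → MvPolynomial σ R) : MvPolynomial σ R := ∑ i, pderiv i (X i)

end MvPolynomial

open MvPolynomial

theorem divergence_cross_grad {R : Type*} [CommRing R] (f g : MvPolynomial (Fin 3) R) :
    divergence (grad f ⨯₃ grad g) = 0 := by
  simp only [divergence, grad, cross_apply, Fin.sum_univ_three, cons_val_zero, cons_val_one,
    cons_val, map_sub, pderiv_mul, pderiv_pderiv_comm (1 : Fin 3) 0,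
    pderiv_pderiv_comm (2 : Fin 3) 0, pderiv_pderiv_comm (2 : Fin 3) 1]
  ring

theorem IsSkew.isTrilinear_of_left {F V : Type} [Field F] [AddCommGroup V] [Module F V]
    {br : V → V → V → V} (hskew : IsSkew br)
    (hleft : ∀ (a : F) (u u' v w : V), br (a • u + u') v w = a • br u v w + br u' v w) :
    IsTrilinear F br := by
  have hmid : ∀ (a : F) (u v v' w : V), br u (a • v + v') w = a • br u v w + br u v' w := by
    intro a u v v' w
    rw [(hskew u _ w).1, hleft, (hskew v u w).1, (hskew v' u w).1]
    simp only [smul_neg, neg_add, neg_neg]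
  refine ⟨hleft, hmid, fun a u v w w' => ?_⟩
  rw [(hskew u v _).2, hmid, (hskew u w v).2, (hskew u w' v).2]
  simp only [smul_neg, neg_add, neg_neg]

variable {F : Type} [Field F]

theorem nambu_eq_dotProduct_cross (f g h : MvPolynomial (Fin 3) F) :
    nambu f g h = grad f ⬝ᵥ grad g ⨯₃ grad h := by
  rw [triple_product_eq_det, nambu]
  congr 1
  ext i j
  fin_cases i <;> fin_cases j <;> rfl

theorem nambu_smul_add_left (a : F) (f f' g h : MvPolynomial (Fin 3) F) :
    nambu (a • f + f') g h = a • nambu f g h + nambu f' g h := by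
  simp only [nambu_eq_dotProduct_cross, grad_smul_add, add_dotProduct, smul_dotProduct]

theorem nambu_swap_left (f g h : MvPolynomial (Fin 3) F) : nambu f g h = -nambu g f h := by
  rw [nambu_eq_dotProduct_cross, nambu_eq_dotProduct_cross, triple_product_permutation (grad g),
    ← cross_anticomm, dotProduct_neg]

theorem nambu_swap_right (f g h : MvPolynomial (Fin 3) F) : nambu f g h = -nambu f h g := by
  rw [nambu_eq_dotProduct_cross, nambu_eq_dotProduct_cross, ← cross_anticomm, dotProduct_neg]

theorem nambu_isSkew : IsSkew (nambu (F := F)) :=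
  fun f g h => ⟨nambu_swap_left f g h, nambu_swap_right f g h⟩

theorem nambu_eq_derivAlong (f g h : MvPolynomial (Fin 3) F) :
    nambu f g h = derivAlong (grad g ⨯₃ grad h) f := by
  rw [nambu_eq_dotProduct_cross, derivAlong, dotProduct_comm]

theorem derivAlong_nambu_add_divergence_mul (X : Fin 3 → MvPolynomial (Fin 3) F)
    (f g h : MvPolynomial (Fin 3) F) :
    derivAlong X (nambu f g h) + divergence X * nambu f g h =
      nambu (derivAlong X f) g h + nambu f (derivAlong X g) h + nambu f g (derivAlong X h) := by
  simp only [nambu_eq_dotProduct_cross, derivAlong, divergence, grad, cross_apply, vec3_dotProduct,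
    Fin.sum_univ_three, cons_val_zero, cons_val_one, cons_val, map_add, map_sub, pderiv_mul,
    pderiv_pderiv_comm (1 : Fin 3) 0, pderiv_pderiv_comm (2 : Fin 3) 0,
    pderiv_pderiv_comm (2 : Fin 3) 1]
  ring

theorem nambu_jacobi : Jacobi (nambu (F := F)) := by
  intro f₁ f₂ f₃ g h
  have key := derivAlong_nambu_add_divergence_mul (grad g ⨯₃ grad h) f₁ f₂ f₃
  rw [divergence_cross_grad, zero_mul, add_zero] at key
  simpa only [← nambu_eq_derivAlong] using key

theorem stmt10_general (F : Type) [Field F] :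
    IsTrilinear F (nambu (F := F)) ∧ IsSkew (nambu (F := F)) ∧
      Jacobi (nambu (F := F)) :=
  ⟨nambu_isSkew.isTrilinear_of_left nambu_smul_add_left, nambu_isSkew, nambu_jacobi⟩

/-- the canonical Nambu bracket is a 3-Lie bracket. -/
theorem stmt10 (F : Type) [Field F] [CharZero F] :
    IsTrilinear F (nambu (F := F)) ∧ IsSkew (nambu (F := F)) ∧
      Jacobi (nambu (F := F)) :=
  stmt10_general F
end
end

section
/- In the 3-Lie algebra A_\omega^\delta with basis {L_r, M_r : r \in \mathbb{Z}} and bracket [L_r, L_s, M_t] = (s-r)L_{r+s-t}, [L_r, M_s, M_t] = (t-s)M_{s+t-r}, the Lie algebra (A, [u,v]_{L_k}) where [u,v]_{L_k} = [u,v,L_k] has center exactly F L_k. -/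
noncomputable section

namespace Stmt12Aux

variable {F : Type} [Field F] (br : A F → A F → A F → A F)

lemma zero1 (htri : IsTrilinear F br) (v w : A F) : br 0 v w = 0 := by
  have h := htri.1 1 0 0 v w
  rw [one_smul, add_zero, one_smul] at h
  exact (left_eq_add.mp h)

lemma zero2 (htri : IsTrilinear F br) (u w : A F) : br u 0 w = 0 := by
  have h := htri.2.1 1 u 0 0 w
  rw [one_smul, add_zero, one_smul] at h
  exact (left_eq_add.mp h)

lemma add1 (htri : IsTrilinear F br) (u u' v w : A F) :
    br (u + u') v w = br u v w + br u' v w := by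
  have h := htri.1 1 u u' v w
  rwa [one_smul, one_smul] at h

lemma smul1 (htri : IsTrilinear F br) (a : F) (u v w : A F) :
    br (a • u) v w = a • br u v w := by
  have h := htri.1 a u 0 v w
  rwa [add_zero, zero1 br htri, add_zero] at h

lemma add2 (htri : IsTrilinear F br) (u v v' w : A F) :
    br u (v + v') w = br u v w + br u v' w := by
  have h := htri.2.1 1 u v v' w
  rwa [one_smul, one_smul] at h

lemma smul2 (htri : IsTrilinear F br) (a : F) (u v w : A F) :
    br u (a • v) w = a • br u v w := by
  have h := htri.2.1 a u v 0 w
  rwa [add_zero, zero2 br htri, add_zero] at h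

/-- The linear map `x ↦ br x v w`. -/
def B1 (htri : IsTrilinear F br) (v w : A F) : A F →ₗ[F] A F where
  toFun x := br x v w
  map_add' x y := add1 br htri x y v w
  map_smul' a x := smul1 br htri a x v w

/-- The linear map `x ↦ br u x w`. -/
def B2 (htri : IsTrilinear F br) (u w : A F) : A F →ₗ[F] A F where
  toFun x := br u x w
  map_add' x y := add2 br htri u x y w
  map_smul' a x := smul2 br htri a u x w

lemma expand1 (htri : IsTrilinear F br) (u v w : A F) :
    br u v w = u.sum (fun i c => c • br (Finsupp.single i (1 : F)) v w) := by
  conv_lhs => rw [← Finsupp.sum_single u]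
  rw [show br (u.sum Finsupp.single) v w = (B1 br htri v w) (u.sum Finsupp.single) from rfl,
    map_finsuppSum]
  refine Finsupp.sum_congr fun i _ => ?_
  rw [show Finsupp.single i (u i) = (u i) • Finsupp.single i (1 : F) by
    rw [Finsupp.smul_single', mul_one], map_smul]
  rfl

lemma expand2 (htri : IsTrilinear F br) (u v w : A F) :
    br u v w = v.sum (fun i c => c • br u (Finsupp.single i (1 : F)) w) := by
  conv_lhs => rw [← Finsupp.sum_single v]
  rw [show br u (v.sum Finsupp.single) w = (B2 br htri u w) (v.sum Finsupp.single) from rfl,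
    map_finsuppSum]
  refine Finsupp.sum_congr fun i _ => ?_
  rw [show Finsupp.single i (v i) = (v i) • Finsupp.single i (1 : F) by
    rw [Finsupp.smul_single', mul_one], map_smul]
  rfl

end Stmt12Aux

open Stmt12Aux in
/-- the Lie algebra `(A, [·,·]_{L_k})` has center exactly `F L_k`. -/
theorem stmt12 (F : Type) [Field F] [CharZero F] (k : ℤ)
    (br : A F → A F → A F → A F)
    (htri : IsTrilinear F br) (hskew : IsSkew br) (hjac : Jacobi br)
    (hAwd : AwdBracket br) :
    ∀ u : A F, (∀ v : A F, br u v (Lb F k) = 0) ↔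
      u ∈ Submodule.span F {Lb F k} := by
  -- basic bracket computations with L_k in the last slot
  have hLM : ∀ r t : ℤ, br (Lb F r) (Mb F t) (Lb F k)
      = ((r : F) - (k : F)) • Lb F (r + k - t) := by
    intro r t
    rw [(hskew (Lb F r) (Mb F t) (Lb F k)).2, hAwd.1 r k t]
    rw [← neg_smul]; ring_nf
  have hMM : ∀ r t : ℤ, br (Mb F r) (Mb F t) (Lb F k)
      = ((t : F) - (r : F)) • Mb F (r + t - k) := by
    intro r t
    rw [(hskew (Mb F r) (Mb F t) (Lb F k)).2,
      (hskew (Mb F r) (Lb F k) (Mb F t)).1, neg_neg, hAwd.2.1 k r t]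
  have hML : ∀ r t : ℤ, br (Mb F r) (Lb F t) (Lb F k)
      = ((k : F) - (t : F)) • Lb F (t + k - r) := by
    intro r t
    rw [(hskew (Mb F r) (Lb F t) (Lb F k)).1,
      (hskew (Lb F t) (Mb F r) (Lb F k)).2, neg_neg, hAwd.1 t k r]
  have hLL : ∀ r t : ℤ, br (Lb F r) (Lb F t) (Lb F k) = 0 := fun r t => hAwd.2.2.1 r t k
  intro u
  constructor
  · intro h
    -- coefficient equations from pairing with M_t
    have key : ∀ (t : ℤ) (j : ℤ ⊕ ℤ),
        (u.sum fun i c => c * (br (Finsupp.single i (1 : F)) (Mb F t) (Lb F k)) j) = 0 := by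
      intro t j
      have h0 := h (Mb F t)
      rw [expand1 br htri] at h0
      have h1 := congrArg (fun f : A F => f j) h0
      simpa [Finsupp.sum_apply, Finsupp.smul_apply, smul_eq_mul] using h1
    have hL : ∀ r : ℤ, r ≠ k → u (Sum.inl r) = 0 := by
      intro r hr
      have hk := key 0 (Sum.inl (r + k - 0))
      rw [Finsupp.sum_eq_single (Sum.inl r)] at hk
      · rw [show Finsupp.single (Sum.inl r) (1 : F) = Lb F r from rfl, hLM] at hk
        simp only [Lb, Finsupp.smul_apply, Finsupp.single_apply, smul_eq_mul] at hk
        rw [if_pos trivial, mul_one] at hk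
        have hrk : (r : F) - (k : F) ≠ 0 := by
          rw [sub_ne_zero]
          exact_mod_cast fun hh => hr (Int.cast_injective hh)
        exact (mul_eq_zero.mp hk).resolve_right hrk
      · intro b _ hb
        rcases b with s | s
        · rw [show Finsupp.single (Sum.inl s) (1 : F) = Lb F s from rfl, hLM]
          have hs : s ≠ r := fun hh => hb (by rw [hh])
          simp [Lb, Finsupp.single_apply, hs]
        · rw [show Finsupp.single (Sum.inr s) (1 : F) = Mb F s from rfl, hMM]
          simp [Mb, Finsupp.single_apply]
      · simp
    have hM : ∀ r : ℤ, u (Sum.inr r) = 0 := by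
      intro r
      have hk := key (r + 1) (Sum.inr (r + (r + 1) - k))
      rw [Finsupp.sum_eq_single (Sum.inr r)] at hk
      · rw [show Finsupp.single (Sum.inr r) (1 : F) = Mb F r from rfl, hMM] at hk
        simp only [Mb, Finsupp.smul_apply, Finsupp.single_apply, smul_eq_mul] at hk
        rw [if_pos trivial, mul_one] at hk
        push_cast at hk
        have h1 : ((r : F) + 1 - r) = 1 := by ring
        rw [h1, mul_one] at hk
        exact hk
      · intro b _ hb
        rcases b with s | s
        · rw [show Finsupp.single (Sum.inl s) (1 : F) = Lb F s from rfl, hLM]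
          simp [Lb, Finsupp.single_apply]
        · rw [show Finsupp.single (Sum.inr s) (1 : F) = Mb F s from rfl, hMM]
          have hs : s ≠ r := fun hh => hb (by rw [hh])
          simp [Mb, Finsupp.single_apply, hs]
      · simp
    have hu : u = u (Sum.inl k) • Lb F k := by
      ext i
      rcases i with s | s
      · by_cases hs : s = k
        · subst hs; simp [Lb, Finsupp.single_apply]
        · rw [hL s hs]; simp [Lb, Finsupp.single_apply, hs, Ne.symm hs]
      · rw [hM s]; simp [Lb, Finsupp.single_apply]
    rw [hu]
    exact Submodule.smul_mem _ _ (Submodule.mem_span_singleton_self _)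
  · intro hu v
    obtain ⟨c, hc⟩ := Submodule.mem_span_singleton.mp hu
    rw [← hc, smul1 br htri]
    have hz : br (Lb F k) v (Lb F k) = 0 := by
      rw [expand2 br htri]
      refine Finset.sum_eq_zero fun i _ => ?_
      rcases i with s | s
      · show (v (Sum.inl s)) • br (Lb F k) (Lb F s) (Lb F k) = 0
        rw [hLL, smul_zero]
      · show (v (Sum.inr s)) • br (Lb F k) (Mb F s) (Lb F k) = 0
        rw [hLM]
        simp
    rw [hz, smul_zero]
end
end

section
/- For the 3-Lie algebra A_\omega^\delta with basis {L_r, M_r : r \in \mathbb{Z}} and bracket [L_r, L_s, M_t] = (s-r)L_{r+s-t}, [L_r, M_s, M_t] = (t-s)M_{s+t-r}, define for each nonzero r \in \mathbb{Z} the inner derivation p_r = (1/2)(ad(L_0, M_{-r}) + ad(L_r, M_0)) and p_0 = ad(L_0, M_0). Then [p_r, p_s] = (r - s) p_{r+s} for all r, s \in \mathbb{Z} (commutator of linear operators on A); hence the span of {p_r} is a Lie algebra isomorphic to the Witt algebra. -/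
noncomputable section

/-- the inner derivations `p_r` of `A_ω^δ` satisfy the Witt
algebra relations `[p_r, p_s] = (r-s) p_{r+s}`. -/
theorem stmt15 (F : Type) [Field F] [CharZero F]
    (br : A F → A F → A F → A F)
    (htri : IsTrilinear F br) (hskew : IsSkew br) (hjac : Jacobi br)
    (hAwd : AwdBracket br)
    (p : ℤ → A F →ₗ[F] A F)
    (hp0 : ∀ w : A F, p 0 w = br (Lb F 0) (Mb F 0) w)
    (hpr : ∀ r : ℤ, r ≠ 0 → ∀ w : A F,
      p r w = (2 : F)⁻¹ • (br (Lb F 0) (Mb F (-r)) w + br (Lb F r) (Mb F 0) w)) :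
    ∀ r s : ℤ, p r ∘ₗ p s - p s ∘ₗ p r = ((r : F) - (s : F)) • p (r + s) := by
  have h2 : (2 : F) ≠ 0 := two_ne_zero
  have hL : ∀ r t : ℤ, p r (Lb F t) = ((2:F)⁻¹ * r - t) • Lb F (t + r) := by
    intro r t
    rcases eq_or_ne r 0 with hr | hr
    · subst hr
      rw [hp0, (hskew (Lb F 0) (Mb F 0) (Lb F t)).2, hAwd.1]
      rw [show (0:ℤ) + t - 0 = t + 0 by ring]
      match_scalars
      push_cast
      ring
    · rw [hpr r hr, (hskew (Lb F 0) (Mb F (-r)) (Lb F t)).2,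
        (hskew (Lb F r) (Mb F 0) (Lb F t)).2, hAwd.1, hAwd.1]
      rw [show (0:ℤ) + t - (-r) = t + r by ring, show r + t - (0:ℤ) = t + r by ring]
      match_scalars
      push_cast
      field_simp
      ring
  have hM : ∀ r t : ℤ, p r (Mb F t) = ((2:F)⁻¹ * r + t) • Mb F (t - r) := by
    intro r t
    rcases eq_or_ne r 0 with hr | hr
    · subst hr
      rw [hp0, hAwd.2.1]
      rw [show (0:ℤ) + t - 0 = t - 0 by ring]
      match_scalars
      push_cast
      ring
    · rw [hpr r hr, hAwd.2.1, hAwd.2.1]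
      rw [show (-r) + t - (0:ℤ) = t - r by ring, show (0:ℤ) + t - r = t - r by ring]
      match_scalars
      push_cast
      field_simp
      ring
  intro r s
  apply (Finsupp.basisSingleOne (R := F) (ι := ℤ ⊕ ℤ)).ext
  rintro (t | t) <;>
    simp only [Finsupp.coe_basisSingleOne, LinearMap.sub_apply, LinearMap.comp_apply,
      LinearMap.smul_apply]
  · rw [show (Finsupp.single (Sum.inl t) 1 : A F) = Lb F t from rfl]
    simp only [hL, map_smul]
    rw [show t + s + r = t + (r + s) by ring, show t + r + s = t + (r + s) by ring]
    match_scalars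
    push_cast
    field_simp
    ring
  · rw [show (Finsupp.single (Sum.inr t) 1 : A F) = Mb F t from rfl]
    simp only [hM, map_smul]
    rw [show t - s - r = t - (r + s) by ring, show t - r - s = t - (r + s) by ring]
    match_scalars
    push_cast
    field_simp
    ring
end
end

section
/- For the 3-Lie algebra A_\omega^\delta with basis {L_r, M_r : r \in \mathbb{Z}} and bracket [L_r, L_s, M_t] = (s-r)L_{r+s-t}, [L_r, M_s, M_t] = (t-s)M_{s+t-r}, define for nonzero r: q_r = (1/r)(ad(L_0, M_{-r}) - ad(L_r, M_0)), x_r = (1/r) ad(L_r, L_0), z_r = (-1/r) ad(M_{-r}, M_0); and q_0 = ad(L_0,M_0) - ad(L_1,M_1), x_0 = (1/2) ad(L_1, L_{-1}), z_0 = (1/2) ad(M_1, M_{-1}). Then as operators on A: [q_r, q_s] = 0, [x_r, x_s] = 0, [z_r, z_s] = 0, [q_r, x_s] = -2 x_{r+s}, [q_r, z_s] = 2 z_{r+s}, and [z_r, x_s] = q_{r+s}, for all r, s \in \mathbb{Z}. Hence the span of {q_r, x_r, z_r : r \in \mathbb{Z}} is a Lie subalgebra of gl(A) isomorphic to sl(2,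 F) \otimes F[t, t^{-1}]. -/
noncomputable section

/-
Every operator in play sends basis vectors to basis vectors up to sign:
`q_r L_t = -L_{t+r}`, `q_r M_t = M_{t-r}`, `x_r L_t = 0`, `x_r M_t = -L_{r-t}`,
`z_r L_t = -M_{-r-t}`, `z_r M_t = 0`. The normalisations `1/r` and `1/2` are exactly what
cancels the structure constants of the bracket, so all six commutation relations reduce
to index arithmetic on `L_t` and `M_t`.
-/

variable {F : Type} [Field F]

theorem linearMap_ext_Lb_Mb {f g : A F →ₗ[F] A F}
    (hL : ∀ n, f (Lb F n) = g (Lb F n)) (hM : ∀ n, f (Mb F n) = g (Mb F n)) : f = g :=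
  Finsupp.basisSingleOne.ext fun
    | .inl n => hL n
    | .inr n => hM n

section Brackets

variable {br : A F → A F → A F → A F} (hskew : IsSkew br) (hAwd : AwdBracket br)
include hskew hAwd

theorem br_Lb_Mb_Lb (r s t : ℤ) :
    br (Lb F r) (Mb F s) (Lb F t) = ((r : F) - t) • Lb F (r + t - s) := by
  rw [(hskew _ _ _).2, hAwd.1, ← neg_smul, neg_sub]

theorem br_Mb_Mb_Lb (r s t : ℤ) :
    br (Mb F r) (Mb F s) (Lb F t) = ((s : F) - r) • Mb F (r + s - t) := by
  rw [(hskew _ _ _).2, (hskew _ _ _).1, neg_neg, hAwd.2.1]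

end Brackets

section BasisValues

variable {br : A F → A F → A F → A F}

theorem x_apply_Lb (hAwd : AwdBracket br) {x : ℤ → A F →ₗ[F] A F}
    (hx0 : ∀ w : A F, x 0 w = (2 : F)⁻¹ • br (Lb F 1) (Lb F (-1)) w)
    (hxr : ∀ r : ℤ, r ≠ 0 → ∀ w : A F, x r w = (r : F)⁻¹ • br (Lb F r) (Lb F 0) w)
    (r t : ℤ) : x r (Lb F t) = 0 := by
  rcases eq_or_ne r 0 with rfl | hr
  · rw [hx0, hAwd.2.2.1, smul_zero]
  · rw [hxr r hr, hAwd.2.2.1, smul_zero]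

theorem z_apply_Mb (hAwd : AwdBracket br) {z : ℤ → A F →ₗ[F] A F}
    (hz0 : ∀ w : A F, z 0 w = (2 : F)⁻¹ • br (Mb F 1) (Mb F (-1)) w)
    (hzr : ∀ r : ℤ, r ≠ 0 → ∀ w : A F,
      z r w = (-(r : F)⁻¹) • br (Mb F (-r)) (Mb F 0) w)
    (r t : ℤ) : z r (Mb F t) = 0 := by
  rcases eq_or_ne r 0 with rfl | hr
  · rw [hz0, hAwd.2.2.2, smul_zero]
  · rw [hzr r hr, hAwd.2.2.2, smul_zero]

variable [CharZero F]

theorem q_apply_Lb (hskew : IsSkew br) (hAwd : AwdBracket br) {q : ℤ → A F →ₗ[F] A F}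
    (hq0 : ∀ w : A F, q 0 w = br (Lb F 0) (Mb F 0) w - br (Lb F 1) (Mb F 1) w)
    (hqr : ∀ r : ℤ, r ≠ 0 → ∀ w : A F,
      q r w = (r : F)⁻¹ • (br (Lb F 0) (Mb F (-r)) w - br (Lb F r) (Mb F 0) w))
    (r t : ℤ) : q r (Lb F t) = -Lb F (t + r) := by
  rcases eq_or_ne r 0 with rfl | hr
  · rw [hq0, br_Lb_Mb_Lb hskew hAwd, br_Lb_Mb_Lb hskew hAwd]
    push_cast
    ring_nf
    module
  · have hr' : (r : F) ≠ 0 := Int.cast_ne_zero.mpr hr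
    rw [hqr r hr, br_Lb_Mb_Lb hskew hAwd, br_Lb_Mb_Lb hskew hAwd]
    ring_nf
    match_scalars
    field_simp
    ring

theorem q_apply_Mb (hAwd : AwdBracket br) {q : ℤ → A F →ₗ[F] A F}
    (hq0 : ∀ w : A F, q 0 w = br (Lb F 0) (Mb F 0) w - br (Lb F 1) (Mb F 1) w)
    (hqr : ∀ r : ℤ, r ≠ 0 → ∀ w : A F,
      q r w = (r : F)⁻¹ • (br (Lb F 0) (Mb F (-r)) w - br (Lb F r) (Mb F 0) w))
    (r t : ℤ) : q r (Mb F t) = Mb F (t - r) := by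
  rcases eq_or_ne r 0 with rfl | hr
  · rw [hq0, hAwd.2.1, hAwd.2.1]
    push_cast
    ring_nf
    module
  · have hr' : (r : F) ≠ 0 := Int.cast_ne_zero.mpr hr
    rw [hqr r hr, hAwd.2.1, hAwd.2.1]
    ring_nf
    match_scalars
    field_simp
    ring

theorem x_apply_Mb (hAwd : AwdBracket br) {x : ℤ → A F →ₗ[F] A F}
    (hx0 : ∀ w : A F, x 0 w = (2 : F)⁻¹ • br (Lb F 1) (Lb F (-1)) w)
    (hxr : ∀ r : ℤ, r ≠ 0 → ∀ w : A F, x r w = (r : F)⁻¹ • br (Lb F r) (Lb F 0) w)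
    (r t : ℤ) : x r (Mb F t) = -Lb F (r - t) := by
  rcases eq_or_ne r 0 with rfl | hr
  · rw [hx0, hAwd.1]
    push_cast
    ring_nf
    match_scalars
    field_simp
  · have hr' : (r : F) ≠ 0 := Int.cast_ne_zero.mpr hr
    rw [hxr r hr, hAwd.1]
    ring_nf
    match_scalars
    field_simp

theorem z_apply_Lb (hskew : IsSkew br) (hAwd : AwdBracket br) {z : ℤ → A F →ₗ[F] A F}
    (hz0 : ∀ w : A F, z 0 w = (2 : F)⁻¹ • br (Mb F 1) (Mb F (-1)) w)
    (hzr : ∀ r : ℤ, r ≠ 0 → ∀ w : A F,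
      z r w = (-(r : F)⁻¹) • br (Mb F (-r)) (Mb F 0) w)
    (r t : ℤ) : z r (Lb F t) = -Mb F (-r - t) := by
  rcases eq_or_ne r 0 with rfl | hr
  · rw [hz0, br_Mb_Mb_Lb hskew hAwd]
    push_cast
    ring_nf
    match_scalars
    field_simp
  · have hr' : (r : F) ≠ 0 := Int.cast_ne_zero.mpr hr
    rw [hzr r hr, br_Mb_Mb_Lb hskew hAwd]
    ring_nf
    match_scalars
    field_simp

end BasisValues

theorem sl2_loop_relations_of_apply_basis {q x z : ℤ → A F →ₗ[F] A F}
    (qL : ∀ r t, q r (Lb F t) = -Lb F (t + r)) (qM : ∀ r t, q r (Mb F t) = Mb F (t - r))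
    (xL : ∀ r t, x r (Lb F t) = 0) (xM : ∀ r t, x r (Mb F t) = -Lb F (r - t))
    (zL : ∀ r t, z r (Lb F t) = -Mb F (-r - t)) (zM : ∀ r t, z r (Mb F t) = 0) (r s : ℤ) :
    (q r ∘ₗ q s - q s ∘ₗ q r = 0) ∧
    (x r ∘ₗ x s - x s ∘ₗ x r = 0) ∧
    (z r ∘ₗ z s - z s ∘ₗ z r = 0) ∧
    (q r ∘ₗ x s - x s ∘ₗ q r = (-2 : F) • x (r + s)) ∧
    (q r ∘ₗ z s - z s ∘ₗ q r = (2 : F) • z (r + s)) ∧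
    (z r ∘ₗ x s - x s ∘ₗ z r = q (r + s)) := by
  refine ⟨?_, ?_, ?_, ?_, ?_, ?_⟩ <;> apply linearMap_ext_Lb_Mb <;> intro n <;>
    simp only [LinearMap.sub_apply, LinearMap.comp_apply, LinearMap.smul_apply,
      LinearMap.zero_apply, map_neg, map_zero, qL, qM, xL, xM, zL, zM] <;>
    (try ring_nf) <;> module

theorem stmt16_general (F : Type) [Field F] [CharZero F]
    (br : A F → A F → A F → A F)
    (hskew : IsSkew br)
    (hAwd : AwdBracket br)
    (q x z : ℤ → A F →ₗ[F] A F)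
    (hq0 : ∀ w : A F, q 0 w = br (Lb F 0) (Mb F 0) w - br (Lb F 1) (Mb F 1) w)
    (hqr : ∀ r : ℤ, r ≠ 0 → ∀ w : A F,
      q r w = (r : F)⁻¹ • (br (Lb F 0) (Mb F (-r)) w - br (Lb F r) (Mb F 0) w))
    (hx0 : ∀ w : A F, x 0 w = (2 : F)⁻¹ • br (Lb F 1) (Lb F (-1)) w)
    (hxr : ∀ r : ℤ, r ≠ 0 → ∀ w : A F, x r w = (r : F)⁻¹ • br (Lb F r) (Lb F 0) w)
    (hz0 : ∀ w : A F, z 0 w = (2 : F)⁻¹ • br (Mb F 1) (Mb F (-1)) w)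
    (hzr : ∀ r : ℤ, r ≠ 0 → ∀ w : A F,
      z r w = (-(r : F)⁻¹) • br (Mb F (-r)) (Mb F 0) w) :
    ∀ r s : ℤ,
      (q r ∘ₗ q s - q s ∘ₗ q r = 0) ∧
      (x r ∘ₗ x s - x s ∘ₗ x r = 0) ∧
      (z r ∘ₗ z s - z s ∘ₗ z r = 0) ∧
      (q r ∘ₗ x s - x s ∘ₗ q r = (-2 : F) • x (r + s)) ∧
      (q r ∘ₗ z s - z s ∘ₗ q r = (2 : F) • z (r + s)) ∧
      (z r ∘ₗ x s - x s ∘ₗ z r = q (r + s)) :=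
  sl2_loop_relations_of_apply_basis (q_apply_Lb hskew hAwd hq0 hqr) (q_apply_Mb hAwd hq0 hqr)
    (x_apply_Lb hAwd hx0 hxr) (x_apply_Mb hAwd hx0 hxr)
    (z_apply_Lb hskew hAwd hz0 hzr) (z_apply_Mb hAwd hz0 hzr)

/-- the inner derivations `q_r, x_r, z_r` of `A_ω^δ` satisfy the
relations of the loop algebra `sl(2,F) ⊗ F[t,t⁻¹]`. -/
theorem stmt16 (F : Type) [Field F] [CharZero F]
    (br : A F → A F → A F → A F)
    (htri : IsTrilinear F br) (hskew : IsSkew br) (hjac : Jacobi br)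
    (hAwd : AwdBracket br)
    (q x z : ℤ → A F →ₗ[F] A F)
    (hq0 : ∀ w : A F, q 0 w = br (Lb F 0) (Mb F 0) w - br (Lb F 1) (Mb F 1) w)
    (hqr : ∀ r : ℤ, r ≠ 0 → ∀ w : A F,
      q r w = (r : F)⁻¹ • (br (Lb F 0) (Mb F (-r)) w - br (Lb F r) (Mb F 0) w))
    (hx0 : ∀ w : A F, x 0 w = (2 : F)⁻¹ • br (Lb F 1) (Lb F (-1)) w)
    (hxr : ∀ r : ℤ, r ≠ 0 → ∀ w : A F, x r w = (r : F)⁻¹ • br (Lb F r) (Lb F 0) w)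
    (hz0 : ∀ w : A F, z 0 w = (2 : F)⁻¹ • br (Mb F 1) (Mb F (-1)) w)
    (hzr : ∀ r : ℤ, r ≠ 0 → ∀ w : A F,
      z r w = (-(r : F)⁻¹) • br (Mb F (-r)) (Mb F 0) w) :
    ∀ r s : ℤ,
      (q r ∘ₗ q s - q s ∘ₗ q r = 0) ∧
      (x r ∘ₗ x s - x s ∘ₗ x r = 0) ∧
      (z r ∘ₗ z s - z s ∘ₗ z r = 0) ∧
      (q r ∘ₗ x s - x s ∘ₗ q r = (-2 : F) • x (r + s)) ∧
      (q r ∘ₗ z s - z s ∘ₗ q r = (2 : F) • z (r + s)) ∧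
      (z r ∘ₗ x s - x s ∘ₗ z r = q (r + s)) :=
  stmt16_general F br hskew hAwd q x z hq0 hqr hx0 hxr hz0 hzr
end
end
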